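/- (Higman) Let G be a finite group and let H be a finite subgroup of V(ℤG). Then the elements of H, regarded as elements of the rational group algebra ℚG via the canonical embedding ℤG → ℚG, are linearly independent over ℚ. -/

import Mathlib

open MonoidAlgebra

/-- The augmentation map of a group ring: the sum of the coefficients. -/
noncomputable def aug (R : Type*) [CommRing R] (G : Type*) [Group G] :
    MonoidAlgebra R G →+* R :=
  MonoidAlgebra.liftNCRingHom (RingHom.id R) 1 (fun _ _ => Commute.one_right _)

/-- The coefficient-wise ring homomorphism between group rings induced by a
ring homomorphism of the coefficient rings. -/
noncomputable def mapCoeff {R S : Type*} [CommRing R] [CommRing S] (G : Type*) [Group G]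
    (f : R →+* S) : MonoidAlgebra R G →+* MonoidAlgebra S G :=
  MonoidAlgebra.liftNCRingHom (MonoidAlgebra.singleOneRingHom.comp f) (MonoidAlgebra.of S G)
    (fun r g => by
      simp [Commute, SemiconjBy, MonoidAlgebra.singleOneRingHom,
        MonoidAlgebra.single_mul_single])

open scoped Classical in
/-- The partial augmentation at `g`: the sum of the coefficients at the
conjugacy class of `g`. -/
noncomputable def partialAug {G : Type*} [Group G] [Fintype G] (g : G)
    (a : MonoidAlgebra ℤ G) : ℤ :=
  ∑ x ∈ Finset.univ.filter (fun x => IsConj g x), a.coeff x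

/-!
Berman–Higman: a torsion unit `u` of `ℤG` with augmentation `1` and `u(1) ≠ 0` is `1`.
Left multiplication by `u` on `ℂG` has finite order, so it is diagonalizable with eigenvalues on
the unit circle, and its trace is `|G| · u(1)`. A sum of `|G|` complex numbers of norm at most `1`
equal to `|G|` times a nonzero integer `c` forces all of them to be `c`; so `u = c`, and the
augmentation gives `c = 1`. Consequently `(h * h₀⁻¹)(1) = 0` for distinct `h, h₀ ∈ H`, and the
functional `a ↦ (a * h₀⁻¹)(1)` extracts the coefficient of `h₀` from any `ℚ`-linear relation.
-/

open Module

theorem Complex.eq_one_of_norm_le_one_of_re_eq_one {w : ℂ} (hw : ‖w‖ ≤ 1) (hre : w.re = 1) :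
    w = 1 := by
  have him : w.im = 0 := Complex.abs_re_eq_norm.mp
    (le_antisymm (Complex.abs_re_le_norm w) (by rw [hre, abs_one]; exact hw))
  exact Complex.ext (by simp [hre]) (by simp [him])

theorem Multiset.forall_eq_of_sum_eq_card_mul {s : Multiset ℂ} (hs : ∀ z ∈ s, ‖z‖ ≤ 1)
    {c : ℂ} (hc : 1 ≤ ‖c‖) (hsum : s.sum = s.card * c) : ∀ z ∈ s, z = c := by
  intro z hz
  have hcard : (0 : ℝ) < s.card := by exact_mod_cast Multiset.card_pos_iff_exists_mem.mpr ⟨z, hz⟩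
  have hc1 : ‖c‖ = 1 := by
    refine le_antisymm (le_of_mul_le_mul_left ?_ hcard) hc
    calc (s.card : ℝ) * ‖c‖ = ‖s.sum‖ := by simp [hsum]
      _ ≤ (s.map (‖·‖)).sum := norm_multiset_sum_le s
      _ ≤ (s.map fun _ ↦ (1 : ℝ)).sum := Multiset.sum_map_le_sum_map _ _ hs
      _ = s.card * 1 := by simp
  -- after rotating by `conj c`, the real parts are at most `1` and sum to `card s`
  set g : ℂ → ℝ := fun z ↦ 1 - (starRingEnd ℂ c * z).re
  have hg : ∀ z ∈ s, 0 ≤ g z := fun z hz ↦ by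
    have := (Complex.re_le_norm (starRingEnd ℂ c * z)).trans (by simpa [hc1] using hs z hz)
    simp only [g]; linarith
  have hsum_g : ∀ t : Multiset ℂ, (t.map g).sum = t.card - (starRingEnd ℂ c * t.sum).re := by
    intro t
    induction t using Multiset.induction_on with
    | empty => simp
    | cons a t ih =>
      rw [Multiset.map_cons, Multiset.sum_cons, ih, Multiset.card_cons, Multiset.sum_cons,
        mul_add, Complex.add_re]
      push_cast; ring
  have hgz : g z = 0 := by
    obtain ⟨t, rfl⟩ := Multiset.exists_cons_of_mem hz
    have hzero : ((z ::ₘ t).map g).sum = 0 := by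
      rw [hsum_g, hsum, mul_left_comm, Complex.conj_mul', hc1]
      simp
    rw [Multiset.map_cons, Multiset.sum_cons] at hzero
    linarith [hg z hz, Multiset.sum_nonneg fun x hx ↦ by
      obtain ⟨y, hy, rfl⟩ := Multiset.mem_map.mp hx; exact hg y (Multiset.mem_cons_of_mem hy)]
  have hrot : starRingEnd ℂ c * z = 1 :=
    Complex.eq_one_of_norm_le_one_of_re_eq_one (by simpa [hc1] using hs z hz) (by linarith)
  calc z = c * (starRingEnd ℂ c * z) := by
        rw [← mul_assoc, Complex.mul_conj', hc1]; simp
    _ = c := by rw [hrot, mul_one]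

namespace Module.End

section

variable {K V : Type*} [Field K] [AddCommGroup V] [Module K V]

theorem isSemisimple_of_pow_eq_one [CharZero K] {f : End K V} {n : ℕ} (hn : n ≠ 0)
    (hf : f ^ n = 1) : f.IsSemisimple := by
  apply isSemisimple_of_squarefree_aeval_eq_zero
    (Polynomial.separable_X_pow_sub_C (1 : K) (by exact_mod_cast hn) one_ne_zero).squarefree
  simp [hf]

theorem eq_algebraMap_of_isSemisimple [FiniteDimensional K V] [IsAlgClosed K] {f : End K V}
    (hf : f.IsSemisimple) {c : K} (hc : ∀ μ, f.HasEigenvalue μ → μ = c) :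
    f = algebraMap K (End K V) c := by
  have : f.eigenspace c = ⊤ := by
    rw [← hf.iSup_eigenspace_eq_top]
    refine le_antisymm (le_iSup _ c) (iSup_le fun μ ↦ ?_)
    by_cases hμ : f.HasEigenvalue μ
    · rw [hc μ hμ]
    · rw [hasEigenvalue_iff, not_not] at hμ
      simp [hμ]
  ext x
  simpa using mem_eigenspace_iff.mp (this ▸ Submodule.mem_top (x := x))

end

theorem eq_algebraMap_of_pow_eq_one_of_trace_eq {V : Type*} [AddCommGroup V]
    [Module ℂ V] [FiniteDimensional ℂ V] {f : End ℂ V} {n : ℕ} (hn : n ≠ 0) (hf : f ^ n = 1)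
    {c : ℂ} (hc : 1 ≤ ‖c‖) (htr : LinearMap.trace ℂ V f = finrank ℂ V * c) :
    f = algebraMap ℂ (End ℂ V) c := by
  have hsplits : f.charpoly.Splits := IsAlgClosed.splits _
  have hroots : ∀ μ ∈ f.charpoly.roots, μ = c := by
    refine Multiset.forall_eq_of_sum_eq_card_mul (fun μ hμ ↦ ?_) hc ?_
    · obtain ⟨x, hx⟩ := ((hasEigenvalue_iff_isRoot_charpoly f μ).mpr
        (Polynomial.isRoot_of_mem_roots hμ)).exists_hasEigenvector
      have hμn : μ ^ n = 1 := smul_left_injective ℂ hx.2 (by simp [← hx.pow_apply n, hf])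
      exact (Complex.norm_eq_one_of_pow_eq_one hμn hn).le
    · rw [← trace_eq_sum_roots_charpoly_of_splits hsplits, htr,
        ← hsplits.natDegree_eq_card_roots, LinearMap.charpoly_natDegree]
  exact eq_algebraMap_of_isSemisimple (isSemisimple_of_pow_eq_one hn hf) fun μ hμ ↦
    hroots μ (Polynomial.mem_roots'.mpr ⟨f.charpoly_monic.ne_zero,
      (hasEigenvalue_iff_isRoot_charpoly f μ).mp hμ⟩)

end Module.End

section GroupRing

variable {G : Type*} [Group G]

theorem mapCoeff_single {R S : Type*} [CommRing R] [CommRing S] (f : R →+* S) (g : G) (r : R) :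
    mapCoeff G f (single g r) = single g (f r) := by
  simp [mapCoeff, liftNCRingHom, liftNC_single, of_apply, singleOneRingHom, single_mul_single]

theorem coeff_mapCoeff {R S : Type*} [CommRing R] [CommRing S] (f : R →+* S)
    (a : MonoidAlgebra R G) (x : G) : (mapCoeff G f a).coeff x = f (a.coeff x) := by
  induction a using MonoidAlgebra.induction_linear with
  | zero => simp
  | add p q hp hq => simp only [map_add, coeff_add, Finsupp.add_apply, hp, hq]
  | single g r => classical simp [mapCoeff_single, coeff_single, Finsupp.single_apply, apply_ite f]

theorem mapCoeff_injective {R S : Type*} [CommRing R] [CommRing S] {f : R →+* S}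
    (hf : Function.Injective f) : Function.Injective (mapCoeff G f) := fun a b h ↦ by
  ext g
  exact hf (by rw [← coeff_mapCoeff, ← coeff_mapCoeff, h])

variable [Fintype G]

theorem trace_lmul_eq_card_mul_coeff_one {k : Type*} [CommRing k] (a : MonoidAlgebra k G) :
    LinearMap.trace k (MonoidAlgebra k G) (Algebra.lmul k (MonoidAlgebra k G) a) =
      Fintype.card G * a.coeff 1 := by
  classical
  rw [LinearMap.trace_eq_matrix_trace k (MonoidAlgebra.basis G k), Matrix.trace]
  have hdiag : ∀ g : G, (LinearMap.toMatrix (MonoidAlgebra.basis G k) (MonoidAlgebra.basis G k)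
      (Algebra.lmul k _ a)).diag g = a.coeff 1 := fun g ↦ by
    rw [Matrix.diag_apply, LinearMap.toMatrix_apply]
    show (a * single g 1).coeff g = a.coeff 1
    rw [coeff_mul_single_apply, mul_inv_cancel, mul_one]
  simp only [hdiag, Finset.sum_const, Finset.card_univ, nsmul_eq_mul]

theorem eq_one_of_isOfFinOrder_of_coeff_one_ne_zero {u : MonoidAlgebra ℤ G} (hu : IsOfFinOrder u)
    (haug : aug ℤ G u = 1) (h1 : u.coeff 1 ≠ 0) : u = 1 := by
  obtain ⟨n, hn, hun⟩ := hu.exists_pow_eq_one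
  set c : ℤ := u.coeff 1
  set v := mapCoeff G (Int.castRingHom ℂ) u
  have : Module.Finite ℂ (MonoidAlgebra ℂ G) := Module.Finite.of_basis (MonoidAlgebra.basis G ℂ)
  have hvc := (Algebra.lmul ℂ (MonoidAlgebra ℂ G) v).eq_algebraMap_of_pow_eq_one_of_trace_eq
    hn.ne' (by rw [← map_pow, ← map_pow, hun, map_one, map_one])
    (c := c) (by simpa using (show (1 : ℝ) ≤ |(c : ℝ)| by exact_mod_cast Int.one_le_abs h1))
    (by rw [trace_lmul_eq_card_mul_coeff_one, finrank_eq_card_basis (MonoidAlgebra.basis G ℂ),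
      coeff_mapCoeff]; rfl)
  have hv : v = c := by simpa [Algebra.algebraMap_eq_smul_one] using congr($hvc 1)
  have hu : u = c :=
    mapCoeff_injective (Int.castRingHom ℂ).injective_int (by rw [map_intCast]; exact hv)
  rw [hu, map_intCast, Int.cast_eq_one] at haug
  rw [hu, haug, Int.cast_one]

theorem coeff_one_eq_zero_of_mem {H : Subgroup (MonoidAlgebra ℤ G)ˣ} [Finite H]
    (hH : ∀ h ∈ H, aug ℤ G (h : MonoidAlgebra ℤ G) = 1) {x : (MonoidAlgebra ℤ G)ˣ} (hx : x ∈ H)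
    (hx1 : x ≠ 1) : (x : MonoidAlgebra ℤ G).coeff 1 = 0 := by
  have hfin := H.subtype.isOfFinOrder (isOfFinOrder_of_finite (⟨x, hx⟩ : H))
  by_contra h1
  exact hx1 (Units.val_eq_one.mp <| eq_one_of_isOfFinOrder_of_coeff_one_ne_zero
    (Units.isOfFinOrder_val.mpr hfin) (hH x hx) h1)

end GroupRing

theorem higman_linearly_independent (G : Type*) [Group G] [Fintype G]
    (H : Subgroup (MonoidAlgebra ℤ G)ˣ) [Finite H]
    (hH : ∀ h ∈ H, aug ℤ G (h : MonoidAlgebra ℤ G) = 1) :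
    LinearIndependent ℚ (fun h : H =>
      mapCoeff G (Int.castRingHom ℚ) ((h : (MonoidAlgebra ℤ G)ˣ) : MonoidAlgebra ℤ G)) := by
  have : Fintype H := Fintype.ofFinite H
  let ι (h : H) : MonoidAlgebra ℚ G :=
    mapCoeff G (Int.castRingHom ℚ) ((h : (MonoidAlgebra ℤ G)ˣ) : MonoidAlgebra ℤ G)
  have hmul (h h₀ : H) : ι h * ι h₀⁻¹ =
      mapCoeff G (Int.castRingHom ℚ) ((h * h₀⁻¹ : H) : (MonoidAlgebra ℤ G)ˣ) :=
    (map_mul _ _ _).symm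
  have hcoeff_ne (h h₀ : H) (hne : h ≠ h₀) : (ι h * ι h₀⁻¹).coeff 1 = 0 := by
    rw [hmul, coeff_mapCoeff, coeff_one_eq_zero_of_mem hH (h * h₀⁻¹).2, map_zero]
    simpa [mul_inv_eq_one] using hne
  have hcoeff_self (h₀ : H) : (ι h₀ * ι h₀⁻¹).coeff 1 = 1 := by
    rw [hmul, mul_inv_cancel, OneMemClass.coe_one, Units.val_one,
      map_one (mapCoeff G (Int.castRingHom ℚ)), one_def, coeff_single, Finsupp.single_eq_same]
  refine Fintype.linearIndependent_iff.mpr fun a ha h₀ ↦ ?_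
  change ∑ h, a h • ι h = 0 at ha
  have key := congr(($ha * ι h₀⁻¹).coeff 1)
  simp only [Finset.sum_mul, smul_mul_assoc, coeff_sum, Finsupp.finsetSum_apply, coeff_smul_apply,
    zero_mul, coeff_zero, Finsupp.zero_apply] at key
  rwa [Finset.sum_eq_single h₀ (fun h _ hne ↦ by rw [hcoeff_ne h h₀ hne, smul_zero]) (by simp), hcoeff_self,
    smul_eq_mul, mul_one] at key
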